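/- For every ρ > 0, the relaxed bound B̄(ρ) = 16·Q(√(8ρ)) + 4∑_{k=2}^∞ (2k+1)·Q(k√(8ρ)) satisfies B̄(ρ) ≤ (1/(2√(πρ)))·(8 e^{-4ρ} + 5 e^{-16ρ}/(1 - e^{-20ρ})). -/

import Mathlib

open Real

noncomputable def gaussQ (x : ℝ) : ℝ :=
  ∫ t in Set.Ioi x, (1 / Real.sqrt (2 * Real.pi)) * Real.exp (-t ^ 2 / 2)

/-!
Each Gaussian tail obeys the Mills-ratio bound `√(2π) x Q(x) ≤ e^{-x²/2}`, which turns
`Q(√(8ρ))` into `e^{-4ρ} / (4√(πρ))` and the `k`-th term of the series into a multiple of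
`e^{-4ρk²}`. For `k ≥ 2` the prefactor `(2k+1)/k` is at most `5/2`, and `4k² ≥ 16 + 20(k-2)`
dominates the series by a geometric one with ratio `e^{-20ρ}`.
-/

open MeasureTheory Set Filter

lemma gaussQ_nonneg (x : ℝ) : 0 ≤ gaussQ x :=
  setIntegral_nonneg measurableSet_Ioi fun _ _ => by positivity

lemma integrable_exp_neg_sq_div_two : Integrable fun t : ℝ => exp (-t ^ 2 / 2) := by
  convert integrable_exp_neg_mul_sq (b := 1 / 2) (by norm_num) using 2
  ring_nf

lemma integrable_mul_exp_neg_sq_div_two : Integrable fun t : ℝ => t * exp (-t ^ 2 / 2) := by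
  convert integrable_mul_exp_neg_mul_sq (b := 1 / 2) (by norm_num) using 4
  ring

lemma integral_Ioi_mul_exp_neg_sq_div_two (x : ℝ) :
    ∫ t in Ioi x, t * exp (-t ^ 2 / 2) = exp (-x ^ 2 / 2) := by
  have hderiv (t : ℝ) : HasDerivAt (fun u => -exp (-u ^ 2 / 2)) (t * exp (-t ^ 2 / 2)) t :=
    ((hasDerivAt_pow 2 t).fun_neg.div_const 2).exp.fun_neg.congr_deriv (by push_cast; ring)
  have hlim : Tendsto (fun u : ℝ => -exp (-u ^ 2 / 2)) atTop (nhds 0) := by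
    have h : Tendsto (fun u : ℝ => -u ^ 2 / 2) atTop atBot := by
      simpa only [neg_div, Function.comp_def] using
        tendsto_neg_atTop_atBot.comp ((tendsto_pow_atTop two_ne_zero).atTop_div_const two_pos)
    simpa using (tendsto_exp_atBot.comp h).neg
  rw [integral_Ioi_of_hasDerivAt_of_tendsto' (fun t _ => hderiv t)
    integrable_mul_exp_neg_sq_div_two.integrableOn hlim]
  ring

lemma gaussQ_le_exp_div {x : ℝ} (hx : 0 < x) :
    gaussQ x ≤ exp (-x ^ 2 / 2) / (sqrt (2 * π) * x) := by
  have hmono : ∫ t in Ioi x, exp (-t ^ 2 / 2) ≤ ∫ t in Ioi x, x⁻¹ * (t * exp (-t ^ 2 / 2)) := by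
    refine setIntegral_mono_on integrable_exp_neg_sq_div_two.integrableOn
      (integrable_mul_exp_neg_sq_div_two.integrableOn.const_mul _) measurableSet_Ioi
      fun t ht => ?_
    rw [← mul_assoc, ← div_eq_inv_mul]
    exact le_mul_of_one_le_left (exp_pos _).le ((one_le_div hx).2 (le_of_lt ht))
  rw [integral_const_mul, integral_Ioi_mul_exp_neg_sq_div_two] at hmono
  rw [gaussQ, integral_const_mul, div_mul_eq_div_div_swap, one_div_mul_eq_div]
  gcongr
  rwa [div_eq_inv_mul]

lemma sqrt_two_pi_mul_sqrt_eight_mul (ρ : ℝ) :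
    sqrt (2 * π) * sqrt (8 * ρ) = 4 * sqrt (π * ρ) := by
  rw [← sqrt_mul (by positivity), show 2 * π * (8 * ρ) = 4 ^ 2 * (π * ρ) by ring,
    sqrt_mul (by norm_num), sqrt_sq (by norm_num)]

lemma gaussQ_mul_sqrt_eight_mul_le {a ρ : ℝ} (ha : 0 < a) (hρ : 0 < ρ) :
    gaussQ (a * sqrt (8 * ρ)) ≤ exp (-4 * ρ * a ^ 2) / (4 * a * sqrt (π * ρ)) := by
  have hx : 0 < a * sqrt (8 * ρ) := mul_pos ha (sqrt_pos.2 (by positivity))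
  convert gaussQ_le_exp_div hx using 2
  · rw [mul_pow, sq_sqrt (by positivity)]
    congr 1; ring
  · rw [mul_left_comm, sqrt_two_pi_mul_sqrt_eight_mul]
    ring

lemma exp_neg_mul_add_two_sq_le {ρ : ℝ} (hρ : 0 ≤ ρ) (k : ℕ) :
    exp (-4 * ρ * ((k : ℝ) + 2) ^ 2) ≤ exp (-16 * ρ) * exp (-20 * ρ) ^ k := by
  rw [← exp_nat_mul, ← exp_add, exp_le_exp]
  have hk : (k : ℝ) ≤ (k : ℝ) ^ 2 := by exact_mod_cast Nat.le_self_pow two_ne_zero k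
  nlinarith [mul_le_mul_of_nonneg_left hk hρ]

lemma tsum_le_div_of_le_geometric {f : ℕ → ℝ} {C r : ℝ} (hf₀ : ∀ n, 0 ≤ f n)
    (hf : ∀ n, f n ≤ C * r ^ n) (hr₀ : 0 ≤ r) (hr₁ : r < 1) :
    ∑' n, f n ≤ C / (1 - r) := by
  have hgeom := (summable_geometric_of_lt_one hr₀ hr₁).mul_left C
  calc ∑' n, f n ≤ ∑' n, C * r ^ n :=
        Summable.tsum_le_tsum hf (hgeom.of_nonneg_of_le hf₀ hf) hgeom
    _ = C / (1 - r) := by rw [tsum_mul_left, tsum_geometric_of_lt_one hr₀ hr₁, div_eq_mul_inv]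

lemma two_mul_add_one_mul_gaussQ_le {ρ : ℝ} (hρ : 0 < ρ) (k : ℕ) :
    (2 * ((k : ℝ) + 2) + 1) * gaussQ (((k : ℝ) + 2) * sqrt (8 * ρ)) ≤
      5 / (8 * sqrt (π * ρ)) * exp (-16 * ρ) * exp (-20 * ρ) ^ k := by
  set S := sqrt (π * ρ)
  have hS : 0 < S := sqrt_pos.2 (by positivity)
  have ha : (0 : ℝ) < k + 2 := by positivity
  have hcoef : (2 * ((k : ℝ) + 2) + 1) / (4 * (k + 2) * S) ≤ 5 / (8 * S) := by
    rw [div_le_div_iff₀ (by positivity) (by positivity)]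
    nlinarith [k.cast_nonneg (α := ℝ)]
  calc (2 * ((k : ℝ) + 2) + 1) * gaussQ (((k : ℝ) + 2) * sqrt (8 * ρ))
      ≤ (2 * ((k : ℝ) + 2) + 1) / (4 * (k + 2) * S) * exp (-4 * ρ * ((k : ℝ) + 2) ^ 2) := by
        rw [div_mul_eq_mul_div, mul_div_assoc]
        exact mul_le_mul_of_nonneg_left (gaussQ_mul_sqrt_eight_mul_le ha hρ) (by positivity)
    _ ≤ 5 / (8 * S) * (exp (-16 * ρ) * exp (-20 * ρ) ^ k) := by
        gcongr
        exact exp_neg_mul_add_two_sq_le hρ.le k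
    _ = 5 / (8 * S) * exp (-16 * ρ) * exp (-20 * ρ) ^ k := by ring

theorem Bbar_relaxed_bound (ρ : ℝ) (hρ : 0 < ρ) :
    16 * gaussQ (Real.sqrt (8 * ρ)) +
        4 * ∑' k : ℕ, (2 * ((k : ℝ) + 2) + 1) * gaussQ (((k : ℝ) + 2) * Real.sqrt (8 * ρ)) ≤
      (1 / (2 * Real.sqrt (Real.pi * ρ))) *
        (8 * Real.exp (-4 * ρ) + 5 * Real.exp (-16 * ρ) / (1 - Real.exp (-20 * ρ))) := by
  have hfirst : gaussQ (sqrt (8 * ρ)) ≤ exp (-4 * ρ) / (4 * sqrt (π * ρ)) := by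
    simpa using gaussQ_mul_sqrt_eight_mul_le one_pos hρ
  have hr : exp (-20 * ρ) < 1 := exp_lt_one_iff.2 (by linarith)
  have hseries := tsum_le_div_of_le_geometric
    (fun k => mul_nonneg (by positivity) (gaussQ_nonneg _))
    (two_mul_add_one_mul_gaussQ_le hρ) (exp_pos _).le hr
  calc _ ≤ 16 * (exp (-4 * ρ) / (4 * sqrt (π * ρ))) +
        4 * (5 / (8 * sqrt (π * ρ)) * exp (-16 * ρ) / (1 - exp (-20 * ρ))) := by
        gcongr
    _ = _ := by field_simp; ring
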